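/- Let (Ω, 𝓕, P) be a probability space, T a nonempty set, and U : T → Ω → ℝ a family of random variables such that for every t ∈ T the random variable U(t) is uniformly distributed on the interval (0,1). Assume that for every integer m ≥ 1, every t ∈ T^m and every x ∈ [0,∞)^m the tail-copula limit R_t(x) = lim_{s↓0} s⁻¹ P[U(t₁) ≤ s·x₁, …, U(t_m) ≤ s·x_m] exists. Then for every d ≥ 1, every t ∈ T^d and all x₁, x₂ ∈ [0,∞)^d: (i) R_{(t,t)}(x₁, x₂) = R_t(x₁ ∧ x₂), where (t,t) ∈ T^{2d} is the duplicated tuple and x₁ ∧ x₂ is the coordinatewise minimum; and (ii) R_t(x₁) − 2·R_t(x₁ ∧ x₂) + R_t(x₂) ≤ 2·Σ_{j=1}^d |x₁ⱼ − x₂ⱼ|; in particular the standard deviation semimetric satisfies ρ₂((t,x₁),(t,x₂)) = (R_t(x₁) − 2·R_{(t,t)}(x₁,x₂) + R_t(x₂))^{1/2} ≤ √2 · (Σ_{j=1}^d |x₁ⱼ − x₂ⱼ|)^{1/2}. -/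

import Mathlib

/-!
Every property of `R` needed here comes from passing to the limit in elementary
facts about the events `{U(t j) ≤ s x j for all j}`. Duplicating `t` intersects
the events for `x₁` and `x₂`, which is the event for `x₁ ⊓ x₂`; this gives (i).
For (ii) one shows `R_t(x) ≤ R_t(y) + ∑ⱼ (xⱼ - yⱼ)` whenever `0 ≤ y ≤ x`, and applies
it to `y = x₁ ⊓ x₂` and `x = x₁`, `x = x₂`. Since `U` need not be measurable,
this is not obtained from the marginals as a difference of probabilities; instead
it follows from monotonicity, positive homogeneity and `R_t(y) ≤ yⱼ`.
-/

open MeasureTheory Filter Set Topology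

section TailCopula

variable {Ω ι : Type*} [MeasurableSpace Ω] {P : Measure Ω} {V : ι → Ω → ℝ}
  {r : (ι → ℝ) → ℝ}

def IsTailCopula (P : Measure Ω) (V : ι → Ω → ℝ) (r : (ι → ℝ) → ℝ) : Prop :=
  ∀ x : ι → ℝ, 0 ≤ x →
    Tendsto (fun s : ℝ => (P {ω | ∀ j, V j ω ≤ s * x j}).toReal / s) (𝓝[>] 0) (𝓝 (r x))

namespace IsTailCopula

theorem nonneg (hr : IsTailCopula P V r) {x : ι → ℝ} (hx : 0 ≤ x) : 0 ≤ r x :=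
  ge_of_tendsto (hr x hx) <| eventually_mem_nhdsWithin.mono fun s (hs : 0 < s) => by positivity

theorem le_apply (hr : IsTailCopula P V r) {j : ι}
    (hunif : ∀ a ∈ Icc (0 : ℝ) 1, P {ω | V j ω ≤ a} = ENNReal.ofReal a)
    {x : ι → ℝ} (hx : 0 ≤ x) : r x ≤ x j := by
  refine le_of_tendsto (hr x hx) ?_
  have hxj : 0 ≤ x j := hx j
  have hδ : (0 : ℝ) < 1 / (x j + 1) := by positivity
  filter_upwards [Ioo_mem_nhdsGT hδ] with s ⟨hs0, hs1⟩
  have hsx : s * x j ∈ Icc (0 : ℝ) 1 := by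
    rw [lt_div_iff₀ (by positivity)] at hs1
    exact ⟨by positivity, by nlinarith⟩
  have hle : P {ω | ∀ k, V k ω ≤ s * x k} ≤ ENNReal.ofReal (s * x j) :=
    hunif _ hsx ▸ measure_mono fun ω h => h j
  rw [div_le_iff₀ hs0, mul_comm]
  exact ENNReal.toReal_le_of_le_ofReal hsx.1 hle

theorem mono [IsFiniteMeasure P] (hr : IsTailCopula P V r) {x y : ι → ℝ} (hx : 0 ≤ x)
    (hxy : x ≤ y) : r x ≤ r y := by
  refine le_of_tendsto_of_tendsto (hr x hx) (hr y (hx.trans hxy)) ?_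
  filter_upwards [self_mem_nhdsWithin] with s (hs : 0 < s)
  refine div_le_div_of_nonneg_right (ENNReal.toReal_mono (measure_ne_top P _) ?_) hs.le
  exact measure_mono fun ω h j => (h j).trans (mul_le_mul_of_nonneg_left (hxy j) hs.le)

theorem smul (hr : IsTailCopula P V r) {x : ι → ℝ} (hx : 0 ≤ x) {c : ℝ} (hc : 0 < c) :
    r (c • x) = c * r x := by
  have hscale : Tendsto (c * ·) (𝓝[>] (0 : ℝ)) (𝓝[>] 0) :=
    tendsto_iff_comap.2 (comap_mulLeft_nhdsGT_zero hc).ge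
  refine tendsto_nhds_unique (hr (c • x) (smul_nonneg hc.le hx)) ?_
  refine (((hr x hx).comp hscale).const_mul c).congr' ?_
  filter_upwards [self_mem_nhdsWithin] with s (hs : 0 < s)
  simp only [Function.comp_apply, Pi.smul_apply, smul_eq_mul, mul_assoc, mul_left_comm s]
  field_simp

variable [Fintype ι]

theorem le_add_sum_sub [IsFiniteMeasure P] (hr : IsTailCopula P V r)
    (hunif : ∀ j, ∀ a ∈ Icc (0 : ℝ) 1, P {ω | V j ω ≤ a} = ENNReal.ofReal a)
    {x y : ι → ℝ} (hy : 0 ≤ y) (hyx : y ≤ x) : r x ≤ r y + ∑ j, (x j - y j) := by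
  have hx : 0 ≤ x := hy.trans hyx
  have hsingle : ∀ j, x j - y j ≤ ∑ j, (x j - y j) := fun j =>
    Finset.single_le_sum (fun k _ => sub_nonneg.2 (hyx k)) (Finset.mem_univ j)
  by_cases hzero : ∃ j, y j = 0
  · obtain ⟨j, hj⟩ := hzero
    have := hr.le_apply (hunif j) hx
    have := hr.nonneg hy
    linarith [hsingle j]
  push Not at hzero
  have hpos : ∀ j, 0 < y j := fun j => (hy j).lt_of_ne' (hzero j)
  cases isEmpty_or_nonempty ι
  · simp [Subsingleton.elim x y]
  -- `x ≤ (1 + c) • y` for the largest relative increment `c`, attained at `j₀`.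
  obtain ⟨j₀, -, hj₀⟩ :=
    Finset.univ.exists_max_image (fun j => (x j - y j) / y j) Finset.univ_nonempty
  set c := (x j₀ - y j₀) / y j₀
  have hc : 0 ≤ c := div_nonneg (sub_nonneg.2 (hyx j₀)) (hpos j₀).le
  have hxc : x ≤ (1 + c) • y := fun j => by
    have := (div_le_iff₀ (hpos j)).1 (hj₀ j (Finset.mem_univ j))
    simp only [Pi.smul_apply, smul_eq_mul]
    linarith
  have hcy : c * r y ≤ x j₀ - y j₀ := by
    calc c * r y ≤ c * y j₀ := mul_le_mul_of_nonneg_left (hr.le_apply (hunif j₀) hy) hc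
      _ = x j₀ - y j₀ := div_mul_cancel₀ _ (hpos j₀).ne'
  calc r x ≤ r ((1 + c) • y) := hr.mono hx hxc
    _ = r y + c * r y := by rw [hr.smul hy (by linarith)]; ring
    _ ≤ r y + ∑ j, (x j - y j) := by linarith [hsingle j₀]

theorem sub_two_mul_inf_add_le [IsFiniteMeasure P] (hr : IsTailCopula P V r)
    (hunif : ∀ j, ∀ a ∈ Icc (0 : ℝ) 1, P {ω | V j ω ≤ a} = ENNReal.ofReal a)
    {x₁ x₂ : ι → ℝ} (hx₁ : 0 ≤ x₁) (hx₂ : 0 ≤ x₂) :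
    r x₁ - 2 * r (fun j => min (x₁ j) (x₂ j)) + r x₂ ≤ 2 * ∑ j, |x₁ j - x₂ j| := by
  have hmin : 0 ≤ fun j => min (x₁ j) (x₂ j) := fun j => le_min (hx₁ j) (hx₂ j)
  have h₁ := hr.le_add_sum_sub hunif hmin fun j => min_le_left (x₁ j) (x₂ j)
  have h₂ := hr.le_add_sum_sub hunif hmin fun j => min_le_right (x₁ j) (x₂ j)
  have hsum : ∑ j, (x₁ j - min (x₁ j) (x₂ j)) + ∑ j, (x₂ j - min (x₁ j) (x₂ j))
      = ∑ j, |x₁ j - x₂ j| := by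
    rw [← Finset.sum_add_distrib]
    refine Finset.sum_congr rfl fun j _ => ?_
    rw [abs_sub_comm, ← max_sub_min_eq_abs]
    linarith [min_add_max (x₁ j) (x₂ j)]
  have : 0 ≤ ∑ j, |x₁ j - x₂ j| := Finset.sum_nonneg fun j _ => abs_nonneg _
  linarith

end IsTailCopula

end TailCopula

theorem Fin.setOf_forall_append_self_le_eq {Ω T : Type*} (U : T → Ω → ℝ) {d : ℕ}
    (t : Fin d → T) (x₁ x₂ : Fin d → ℝ) {s : ℝ} (hs : 0 ≤ s) :
    {ω | ∀ j, U (Fin.append t t j) ω ≤ s * Fin.append x₁ x₂ j}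
      = {ω | ∀ j, U (t j) ω ≤ s * min (x₁ j) (x₂ j)} := by
  ext ω
  simp only [mem_ofPred_eq, Fin.forall_fin_add, Fin.append_left, Fin.append_right,
    mul_min_of_nonneg _ _ hs, le_min_iff, forall_and]

theorem Fin.append_nonneg {d : ℕ} {x₁ x₂ : Fin d → ℝ} (hx₁ : 0 ≤ x₁) (hx₂ : 0 ≤ x₂) :
    0 ≤ Fin.append x₁ x₂ :=
  (Fin.forall_fin_add _).2 ⟨fun i => by rw [Fin.append_left]; exact hx₁ i,
    fun i => by rw [Fin.append_right]; exact hx₂ i⟩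

theorem empirical_tail_copulas_stmt15_general
    {Ω : Type*} [MeasurableSpace Ω] (P : Measure Ω) [IsProbabilityMeasure P]
    {T : Type*} (U : T → Ω → ℝ)
    (hunif : ∀ t : T, ∀ x ∈ Icc (0:ℝ) 1, P {ω | U t ω ≤ x} = ENNReal.ofReal x)
    (R : ∀ m : ℕ, (Fin m → T) → (Fin m → ℝ) → ℝ)
    (hR : ∀ m : ℕ, 1 ≤ m → ∀ (t : Fin m → T) (x : Fin m → ℝ), (∀ j, 0 ≤ x j) →
      Tendsto (fun s : ℝ => (P {ω | ∀ j, U (t j) ω ≤ s * x j}).toReal / s)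
        (𝓝[>] (0:ℝ)) (𝓝 (R m t x)))
    (d : ℕ) (hd : 1 ≤ d) (t : Fin d → T) (x₁ x₂ : Fin d → ℝ)
    (hx₁ : ∀ j, 0 ≤ x₁ j) (hx₂ : ∀ j, 0 ≤ x₂ j) :
    R (d + d) (Fin.append t t) (Fin.append x₁ x₂)
        = R d t (fun j => min (x₁ j) (x₂ j)) ∧
      R d t x₁ - 2 * R d t (fun j => min (x₁ j) (x₂ j)) + R d t x₂
        ≤ 2 * ∑ j, |x₁ j - x₂ j| ∧
      Real.sqrt (R d t x₁ - 2 * R (d + d) (Fin.append t t) (Fin.append x₁ x₂) + R d t x₂)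
        ≤ Real.sqrt 2 * Real.sqrt (∑ j, |x₁ j - x₂ j|) := by
  have hRt : IsTailCopula P (fun j => U (t j)) (R d t) := hR d hd t
  have hdup : R (d + d) (Fin.append t t) (Fin.append x₁ x₂)
      = R d t (fun j => min (x₁ j) (x₂ j)) := by
    refine tendsto_nhds_unique ?_ (hRt _ fun j => le_min (hx₁ j) (hx₂ j))
    refine (hR (d + d) (by omega) _ _ (Fin.append_nonneg hx₁ hx₂)).congr' ?_
    filter_upwards [self_mem_nhdsWithin] with s (hs : 0 < s)
    rw [Fin.setOf_forall_append_self_le_eq U t x₁ x₂ hs.le]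
  have hbound := hRt.sub_two_mul_inf_add_le (fun j => hunif (t j)) hx₁ hx₂
  refine ⟨hdup, hbound, ?_⟩
  rw [hdup, ← Real.sqrt_mul zero_le_two]
  exact Real.sqrt_le_sqrt hbound

/-- Identity `R_{(t,t)}(x₁,x₂) = R_t(x₁ ∧ x₂)` and the resulting bound on the
standard deviation semimetric in the `x`-argument. -/
theorem empirical_tail_copulas_stmt15
    {Ω : Type*} [MeasurableSpace Ω] (P : Measure Ω) [IsProbabilityMeasure P]
    {T : Type*} [Nonempty T] (U : T → Ω → ℝ)
    (hunif : ∀ t : T, ∀ x ∈ Icc (0:ℝ) 1, P {ω | U t ω ≤ x} = ENNReal.ofReal x)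
    (R : ∀ m : ℕ, (Fin m → T) → (Fin m → ℝ) → ℝ)
    (hR : ∀ m : ℕ, 1 ≤ m → ∀ (t : Fin m → T) (x : Fin m → ℝ), (∀ j, 0 ≤ x j) →
      Tendsto (fun s : ℝ => (P {ω | ∀ j, U (t j) ω ≤ s * x j}).toReal / s)
        (𝓝[>] (0:ℝ)) (𝓝 (R m t x)))
    (d : ℕ) (hd : 1 ≤ d) (t : Fin d → T) (x₁ x₂ : Fin d → ℝ)
    (hx₁ : ∀ j, 0 ≤ x₁ j) (hx₂ : ∀ j, 0 ≤ x₂ j) :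
    R (d + d) (Fin.append t t) (Fin.append x₁ x₂)
        = R d t (fun j => min (x₁ j) (x₂ j)) ∧
      R d t x₁ - 2 * R d t (fun j => min (x₁ j) (x₂ j)) + R d t x₂
        ≤ 2 * ∑ j, |x₁ j - x₂ j| ∧
      Real.sqrt (R d t x₁ - 2 * R (d + d) (Fin.append t t) (Fin.append x₁ x₂) + R d t x₂)
        ≤ Real.sqrt 2 * Real.sqrt (∑ j, |x₁ j - x₂ j|) :=
  empirical_tail_copulas_stmt15_general P U hunif R hR d hd t x₁ x₂ hx₁ hx₂
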